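/- The kernel of any morphism between finitely generated free Z^2-persistence modules is itself a free Z^2-persistence module. -/

import Mathlib

open CategoryTheory Limits
open scoped Classical

/-- `ℤⁿ` with the product partial order. -/
abbrev Zn (n : ℕ) := Fin n → ℤ

noncomputable instance ZnCat (n : ℕ) : Category (Zn n) := Preorder.smallCategory _

/-- The category of `ℤⁿ`-persistence modules over a field `k`. -/
abbrev PersMod (n : ℕ) (k : Type) [Field k] :=
  @CategoryTheory.Functor (Zn n) (ZnCat n) (ModuleCat k) _

variable {n : ℕ} {k : Type} [Field k]

/-- The free persistence module `F(z)` generated at grade `z`: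
`F(z)_w = k` if `z ≤ w` and `0` otherwise, with identity structure maps. -/
noncomputable def Fgen (k : Type) [Field k] {n : ℕ} (z : Zn n) : PersMod n k where
  obj w := ModuleCat.of k (↥(if z ≤ w then (⊤ : Submodule k k) else ⊥))
  map {w w'} h := ModuleCat.ofHom (Submodule.inclusion (by
    by_cases hz : z ≤ w
    · simp [hz, hz.trans (leOfHom h)]
    · rw [if_neg hz]; exact bot_le))
  map_id := by intros; rfl
  map_comp := by intros; rfl

/-- The finite rank free persistence module `⊕ᵢ F(r i)` with basis elements of grades `r i`,
realized with components `Πᵢ F(r i)_w ⊆ k`. -/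
noncomputable def FreeMod (k : Type) [Field k] {n m : ℕ} (r : Fin m → Zn n) : PersMod n k where
  obj w := ModuleCat.of k (∀ i : Fin m, ↥(if r i ≤ w then (⊤ : Submodule k k) else ⊥))
  map {w w'} h := ModuleCat.ofHom (LinearMap.pi fun i =>
    (Submodule.inclusion (by
      by_cases hz : r i ≤ w
      · simp [hz, hz.trans (leOfHom h)]
      · rw [if_neg hz]; exact bot_le)).comp (LinearMap.proj i))
  map_id := by intros; rfl
  map_comp := by intros; rfl

/-!
Identify the degree-`w` component of the free module `⊕ⱼ F(c j)` with the vectors of `kᵐ`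
supported on `{j | c j ≤ w}`. The kernel of `f` becomes a family of subspaces `K w ⊆ kᵐ`,
monotone in `w`, and since the structure maps of free modules are injective,
`K w ⊓ K w' = K (w ⊓ w')`. A filtration of a finite-dimensional space indexed by `ℤ²` with
this property, zero below and constant above a box, has an adapted basis: at each grid point
`(p + 1, q + 1)` choose a complement of `K (p, q + 1) ⊔ K (p + 1, q)`; the union of bases of
these complements spans each `K w` by the vectors born at grades `≤ w`, and it is linearly
independent by a dimension count, which is exact because `K (p, q + 1) ⊓ K (p + 1, q) = K (p, q)`
(there is no such inclusion–exclusion for three subspaces, hence no such statement for `ℤ³`).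
Sending the generator of grade `r t` to the `t`-th basis vector gives a free module mapping
isomorphically onto the kernel.
-/

open Submodule Module

theorem eq_sum_range_sum_range_of_mixed_diff (f c : ℕ → ℕ → ℕ)
    (hf0 : ∀ q, f 0 q = 0) (hf0' : ∀ p, f p 0 = 0)
    (hstep : ∀ p q, f (p + 1) (q + 1) + f p q = c p q + f p (q + 1) + f (p + 1) q) (P Q : ℕ) :
    f P Q = ∑ p ∈ Finset.range P, ∑ q ∈ Finset.range Q, c p q := by
  induction P generalizing Q with
  | zero => simp [hf0]
  | succ P ihP =>
    induction Q with
    | zero => simp [hf0']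
    | succ Q ihQ =>
      have ihP' := ihP (Q + 1)
      simp only [Finset.sum_range_succ, Finset.sum_add_distrib] at ihQ ihP' ⊢
      linarith [hstep P Q, ihP Q]

theorem zn_two_le_iff {w w' : Zn 2} : w ≤ w' ↔ w 0 ≤ w' 0 ∧ w 1 ≤ w' 1 := by
  simp [Pi.le_def, Fin.forall_fin_two]

section LinearAlgebra

variable {K V : Type*} [Field K] [AddCommGroup V] [Module K V]

theorem finrank_add_finrank_inf_eq_of_disjoint_sup [FiniteDimensional K V]
    {A B C E : Submodule K V} (hdisj : Disjoint (A ⊔ B) C) (hsup : A ⊔ B ⊔ C = E) :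
    finrank K E + finrank K ↥(A ⊓ B) = finrank K C + finrank K A + finrank K B := by
  have hABC := finrank_sup_add_finrank_inf_eq (A ⊔ B) C
  rw [hsup, hdisj.eq_bot, finrank_bot] at hABC
  have hAB := finrank_sup_add_finrank_inf_eq A B
  omega

theorem span_range_coe_finBasis [FiniteDimensional K V] (C : Submodule K V) :
    span K (Set.range fun i => (finBasis K C i : V)) = C := by
  rw [Set.range_comp', ← C.coe_subtype, span_image, (finBasis K C).span_eq, Submodule.map_top,
    range_subtype]

theorem eq_span_of_le_sup_span {ι : Type*} (D : ℕ × ℕ → Submodule K V) (hD : Monotone D)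
    (hD0 : ∀ q, D (0, q) = ⊥) (hD0' : ∀ p, D (p, 0) = ⊥)
    (v : ι → V) (g : ι → ℕ × ℕ) (hv : ∀ i, v i ∈ D (g i)) (N : ℕ)
    (hgen : ∀ p < N, ∀ q < N,
      D (p + 1, q + 1) ≤
        D (p, q + 1) ⊔ D (p + 1, q) ⊔ span K (v '' {i | g i = (p + 1, q + 1)}))
    {P Q : ℕ} (hP : P ≤ N) (hQ : Q ≤ N) :
    D (P, Q) = span K (v '' {i | g i ≤ (P, Q)}) := by
  have hspan_mono : ∀ {x y : ℕ × ℕ}, x ≤ y →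
      span K (v '' {i | g i ≤ x}) ≤ span K (v '' {i | g i ≤ y}) :=
    fun hxy => span_mono (Set.image_mono fun _ hi => le_trans hi hxy)
  refine le_antisymm ?_ (span_le.2 ?_)
  · induction P generalizing Q with
    | zero => simp [hD0]
    | succ P ihP =>
      induction Q with
      | zero => simp [hD0']
      | succ Q ihQ =>
        refine (hgen P (by omega) Q (by omega)).trans (sup_le (sup_le ?_ ?_) (span_mono ?_))
        · exact (ihP (by omega) hQ).trans (hspan_mono (Prod.mk_le_mk.2 ⟨P.le_succ, le_rfl⟩))
        · exact (ihQ (by omega)).trans (hspan_mono (Prod.mk_le_mk.2 ⟨le_rfl, Q.le_succ⟩))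
        · exact Set.image_mono fun i hi => le_of_eq hi
  · rintro _ ⟨i, hi, rfl⟩
    exact hD hi (hv i)

theorem finrank_eq_sum_sum_finrank_of_disjoint_sup [FiniteDimensional K V]
    (D : ℕ × ℕ → Submodule K V) (hD : Monotone D)
    (hD0 : ∀ q, D (0, q) = ⊥) (hD0' : ∀ p, D (p, 0) = ⊥)
    (hinf : ∀ p q, D (p, q + 1) ⊓ D (p + 1, q) ≤ D (p, q)) (C : ℕ → ℕ → Submodule K V)
    (hCdisj : ∀ p q, Disjoint (D (p, q + 1) ⊔ D (p + 1, q)) (C p q))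
    (hCsup : ∀ p q, D (p, q + 1) ⊔ D (p + 1, q) ⊔ C p q = D (p + 1, q + 1)) (P Q : ℕ) :
    finrank K (D (P, Q)) =
      ∑ p ∈ Finset.range P, ∑ q ∈ Finset.range Q, finrank K (C p q) := by
  refine eq_sum_range_sum_range_of_mixed_diff (fun P Q => finrank K (D (P, Q))) _
    (fun q => by simp [hD0]) (fun p => by simp [hD0']) (fun p q => ?_) P Q
  rw [← (hinf p q).antisymm (le_inf (hD (Prod.mk_le_mk.2 ⟨le_rfl, q.le_succ⟩))
    (hD (Prod.mk_le_mk.2 ⟨p.le_succ, le_rfl⟩)))]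
  exact finrank_add_finrank_inf_eq_of_disjoint_sup (hCdisj p q) (hCsup p q)

theorem exists_linearIndependent_span_eq_of_grid [FiniteDimensional K V]
    (D : ℕ × ℕ → Submodule K V) (hD : Monotone D)
    (hD0 : ∀ q, D (0, q) = ⊥) (hD0' : ∀ p, D (p, 0) = ⊥)
    (hinf : ∀ p q, D (p, q + 1) ⊓ D (p + 1, q) ≤ D (p, q)) (N : ℕ) :
    ∃ (s : ℕ) (v : Fin s → V) (g : Fin s → ℕ × ℕ), LinearIndependent K v ∧
      (∀ t, g t ∈ Set.Icc (1, 1) (N, N)) ∧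
      ∀ P ≤ N, ∀ Q ≤ N, D (P, Q) = span K (v '' {t | g t ≤ (P, Q)}) := by
  have hle : ∀ p q, D (p, q + 1) ⊔ D (p + 1, q) ≤ D (p + 1, q + 1) := fun p q =>
    sup_le (hD (Prod.mk_le_mk.2 ⟨p.le_succ, le_rfl⟩))
      (hD (Prod.mk_le_mk.2 ⟨le_rfl, q.le_succ⟩))
  choose C hCdisj hCsup using fun p q => IsModularLattice.exists_disjoint_and_sup_eq (hle p q)
  let ι := Σ z : Fin N × Fin N, Fin (finrank K (C z.1 z.2))
  let v : ι → V := fun t => finBasis K (C t.1.1 t.1.2) t.2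
  let g : ι → ℕ × ℕ := fun t => (t.1.1 + 1, t.1.2 + 1)
  have hg : ∀ t, g t ∈ Set.Icc (1, 1) (N, N) := fun t =>
    ⟨Prod.mk_le_mk.2 ⟨by omega, by omega⟩, Prod.mk_le_mk.2 ⟨t.1.1.isLt, t.1.2.isLt⟩⟩
  have hspan : ∀ P ≤ N, ∀ Q ≤ N, D (P, Q) = span K (v '' {t | g t ≤ (P, Q)}) := by
    refine fun P hP Q hQ => eq_span_of_le_sup_span D hD hD0 hD0' v g (fun t => ?_) N
      (fun p hp q hq => ?_) hP hQ
    · exact hCsup _ _ ▸ le_sup_right (a := D (t.1.1, t.1.2 + 1) ⊔ D (t.1.1 + 1, t.1.2))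
        (finBasis K (C t.1.1 t.1.2) t.2).2
    · rw [← hCsup p q, ← span_range_coe_finBasis (C p q)]
      refine sup_le_sup_left (span_mono ?_) _
      rintro _ ⟨i, rfl⟩
      exact ⟨⟨(⟨p, hp⟩, ⟨q, hq⟩), i⟩, rfl, rfl⟩
  have hcard : Fintype.card ι = finrank K (D (N, N)) := by
    rw [finrank_eq_sum_sum_finrank_of_disjoint_sup D hD hD0 hD0' hinf C hCdisj hCsup,
      Fintype.card_sigma, Fintype.sum_prod_type, ← Fin.sum_univ_eq_sum_range]
    simp_rw [← Fin.sum_univ_eq_sum_range (fun q => finrank K (C _ q)), Fintype.card_fin]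
  have hrange : Set.range v = v '' {t | g t ≤ (N, N)} := by
    rw [← Set.image_univ]; congr; ext t; simp [(hg t).2]
  have hv : LinearIndependent K v := by
    rw [linearIndependent_iff_card_eq_finrank_span, Set.finrank, hrange,
      ← hspan N le_rfl N le_rfl, hcard]
  let e := Fintype.equivFin ι
  refine ⟨Fintype.card ι, v ∘ e.symm, g ∘ e.symm, hv.comp _ e.symm.injective, fun t => hg _,
    fun P hP Q hQ => ?_⟩
  rw [hspan P hP Q hQ, Set.image_comp]
  congr
  exact (e.symm.image_preimage _).symm

theorem exists_linearIndependent_span_eq [FiniteDimensional K V] (D : Zn 2 → Submodule K V)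
    (hD : Monotone D) (hinf : ∀ w w', D w ⊓ D w' ≤ D (w ⊓ w')) (lo hi : Zn 2)
    (hlo : ∀ w, ¬ lo ≤ w → D w = ⊥) (hhi : ∀ w, D w ≤ D (w ⊓ hi)) :
    ∃ (s : ℕ) (v : Fin s → V) (r : Fin s → Zn 2), LinearIndependent K v ∧
      ∀ w, D w = span K (v '' {t | r t ≤ w}) := by
  -- the grid starts one step below `lo`, so its zero row and column lie where `D` vanishes
  let pt : ℕ × ℕ → Zn 2 := fun x => ![lo 0 - 1 + x.1, lo 1 - 1 + x.2]
  have hE : Monotone (D ∘ pt) := fun x y hxy => hD <| by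
    have := Prod.mk_le_mk.1 hxy
    simp only [zn_two_le_iff, pt, Matrix.cons_val_zero, Matrix.cons_val_one]
    omega
  have hE0 : ∀ q, D (pt (0, q)) = ⊥ := fun q => hlo _ <| by
    simp only [zn_two_le_iff, pt, Matrix.cons_val_zero, Matrix.cons_val_one]
    omega
  have hE0' : ∀ p, D (pt (p, 0)) = ⊥ := fun p => hlo _ <| by
    simp only [zn_two_le_iff, pt, Matrix.cons_val_zero, Matrix.cons_val_one]
    omega
  have hEinf : ∀ p q, D (pt (p, q + 1)) ⊓ D (pt (p + 1, q)) ≤ D (pt (p, q)) := fun p q => by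
    convert hinf _ _ using 2
    ext i; fin_cases i <;> simp [pt]
  obtain ⟨N, hN⟩ : ∃ N : ℕ, N = (hi 0 - lo 0 + 1).toNat + (hi 1 - lo 1 + 1).toNat :=
    ⟨_, rfl⟩
  obtain ⟨s, v, g, hv, hgN, hspan⟩ :=
    exists_linearIndependent_span_eq_of_grid (D ∘ pt) hE hE0 hE0' hEinf N
  refine ⟨s, v, pt ∘ g, hv, fun w => ?_⟩
  obtain ⟨P, hP⟩ : ∃ P : ℕ, P = min N (w 0 - lo 0 + 1).toNat := ⟨_, rfl⟩
  obtain ⟨Q, hQ⟩ : ∃ Q : ℕ, Q = min N (w 1 - lo 1 + 1).toNat := ⟨_, rfl⟩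
  have hDw : D w = D (pt (P, Q)) := by
    by_cases hw : lo ≤ w
    · refine le_antisymm ((hhi w).trans (hD ?_)) (hD ?_) <;>
      simp only [zn_two_le_iff, Pi.inf_apply, pt, Matrix.cons_val_zero,
        Matrix.cons_val_one] at hw ⊢ <;>
      omega
    · rw [hlo w hw, hlo]
      simp only [zn_two_le_iff, pt, Matrix.cons_val_zero, Matrix.cons_val_one] at hw ⊢
      omega
  have hset : {t | (pt ∘ g) t ≤ w} = {t | g t ≤ (P, Q)} := by
    ext t
    have := Prod.le_def.1 (hgN t).1
    have := Prod.le_def.1 (hgN t).2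
    change pt (g t) ≤ w ↔ g t ≤ (P, Q)
    simp only [zn_two_le_iff, pt, Matrix.cons_val_zero, Matrix.cons_val_one, Prod.le_def]
    omega
  rw [hDw, hset]
  exact hspan P (by omega) Q (by omega)

end LinearAlgebra

section FunctorCategory

variable {C : Type*} [Category C] {R : Type*} [Ring R] {F G H : C ⥤ ModuleCat R}

theorem nonempty_kernel_iso_of_range_eq_ker (g : F ⟶ G) (f : G ⟶ H)
    (hinj : ∀ c, Function.Injective (g.app c))
    (hexact : ∀ c, LinearMap.range (g.app c).hom = LinearMap.ker (f.app c).hom) :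
    Nonempty (kernel f ≅ F) := by
  have hgf : g ≫ f = 0 := by
    ext c x
    simpa using LinearMap.mem_ker.1 (hexact c ▸ LinearMap.mem_range_self (g.app c).hom x)
  have hgf_app : ∀ c, g.app c ≫ f.app c = 0 := fun c => by rw [← NatTrans.comp_app, hgf]; rfl
  have hlim : ∀ c, IsLimit (KernelFork.ofι (g.app c) (hgf_app c)) := fun c =>
    have : Mono (g.app c) := (ModuleCat.mono_iff_injective _).2 (hinj c)
    ((ShortComplex.moduleCat_exact_iff_range_eq_ker (.mk _ _ (hgf_app c))).2 (hexact c)).fIsKernel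
  exact ⟨(kernelIsKernel f).conePointUniqueUpToIso (evaluationJointlyReflectsLimits _ fun c =>
    (isLimitMapConeForkEquiv' ((evaluation C (ModuleCat R)).obj c) hgf).symm (hlim c))⟩

end FunctorCategory

namespace FreeMod

section Coordinates

variable {m : ℕ} (r : Fin m → Zn n)

noncomputable def toPi (w : Zn n) : (FreeMod k r).obj w →ₗ[k] (Fin m → k) :=
  LinearMap.pi fun j => (Submodule.subtype _).comp (LinearMap.proj j)

variable {r}

theorem toPi_injective (w : Zn n) : Function.Injective (toPi (k := k) r w) :=
  fun _ _ hxy => funext fun j => Subtype.ext (congrFun hxy j)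

theorem toPi_map {w w' : Zn n} (h : w ⟶ w') (x : (FreeMod k r).obj w) :
    toPi r w' ((FreeMod k r).map h x) = toPi r w x :=
  rfl

theorem toPi_apply_eq_zero {w : Zn n} (x : (FreeMod k r).obj w) {j : Fin m} (hj : ¬ r j ≤ w) :
    toPi r w x j = 0 := by
  have hxj := (x j).2
  simp only [if_neg hj] at hxj
  exact (mem_bot k).1 hxj

theorem exists_toPi_eq {w : Zn n} {u : Fin m → k} (hu : ∀ j, ¬ r j ≤ w → u j = 0) :
    ∃ x : (FreeMod k r).obj w, toPi r w x = u := by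
  refine ⟨fun j => ⟨u j, ?_⟩, rfl⟩
  split_ifs with h
  exacts [mem_top, hu j h ▸ zero_mem _]

theorem map_injective {w w' : Zn n} (h : w ⟶ w') : Function.Injective ((FreeMod k r).map h) :=
  fun x y hxy => toPi_injective w (by rw [← toPi_map h x, ← toPi_map h y, hxy])

end Coordinates

section KernelFiltration

variable {m m' : ℕ} {c : Fin m → Zn n} {r : Fin m' → Zn n} (f : FreeMod k c ⟶ FreeMod k r)

noncomputable def kerFiltration (w : Zn n) : Submodule k (Fin m → k) :=
  map (toPi c w) (LinearMap.ker (f.app w).hom)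

variable {f}

theorem apply_eq_zero_of_mem_kerFiltration {w : Zn n} {u : Fin m → k}
    (hu : u ∈ kerFiltration f w) {j : Fin m} (hj : ¬ c j ≤ w) : u j = 0 := by
  obtain ⟨x, -, rfl⟩ := hu
  exact toPi_apply_eq_zero x hj

/-- Structure maps of free modules are injective, so a kernel vector stays in the kernel at any
grade `w'` at which it is defined: compare both at `w ⊔ w'`. -/
theorem mem_kerFiltration_of_mem {w w' : Zn n} {u : Fin m → k} (hu : u ∈ kerFiltration f w)
    (hu' : ∀ j, ¬ c j ≤ w' → u j = 0) : u ∈ kerFiltration f w' := by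
  obtain ⟨x, hx, rfl⟩ := hu
  obtain ⟨y, hy⟩ := exists_toPi_eq hu'
  have hw : w ≤ w ⊔ w' := le_sup_left
  have hw' : w' ≤ w ⊔ w' := le_sup_right
  have hxy : (FreeMod k c).map (homOfLE hw') y = (FreeMod k c).map (homOfLE hw) x :=
    toPi_injective _ (by rw [toPi_map, toPi_map, hy])
  refine ⟨y, ?_, hy⟩
  apply map_injective (homOfLE hw')
  rw [← NatTrans.naturality_apply, hxy, NatTrans.naturality_apply, LinearMap.mem_ker.1 hx]
  simp

theorem kerFiltration_le {w w' : Zn n} (h : ∀ j, c j ≤ w → c j ≤ w') :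
    kerFiltration f w ≤ kerFiltration f w' := fun _ hu =>
  mem_kerFiltration_of_mem hu fun j hj => apply_eq_zero_of_mem_kerFiltration hu (mt (h j) hj)

theorem kerFiltration_mono : Monotone (kerFiltration f) := fun _ _ h =>
  kerFiltration_le fun _ hj => hj.trans h

theorem kerFiltration_inf_le (w w' : Zn n) :
    kerFiltration f w ⊓ kerFiltration f w' ≤ kerFiltration f (w ⊓ w') := by
  rintro u ⟨hu, hu'⟩
  refine mem_kerFiltration_of_mem hu fun j hj => ?_
  rcases not_and_or.1 (le_inf_iff.not.1 hj) with hj | hj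
  exacts [apply_eq_zero_of_mem_kerFiltration hu hj, apply_eq_zero_of_mem_kerFiltration hu' hj]

theorem kerFiltration_eq_bot {w : Zn n} (h : ∀ j, ¬ c j ≤ w) : kerFiltration f w = ⊥ :=
  eq_bot_iff.2 fun _ hu =>
    (mem_bot k).2 (funext fun j => apply_eq_zero_of_mem_kerFiltration hu (h j))

end KernelFiltration

section OfVectors

variable {m s : ℕ} (r : Fin s → Zn n) (c : Fin m → Zn n) (v : Fin s → Fin m → k)

theorem linearCombination_toPi_apply_eq_zero (hv : ∀ t j, ¬ c j ≤ r t → v t j = 0) {w : Zn n}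
    (x : (FreeMod k r).obj w) {j : Fin m} (hj : ¬ c j ≤ w) :
    Fintype.linearCombination k v (toPi r w x) j = 0 := by
  rw [Fintype.linearCombination_apply, Finset.sum_apply]
  refine Finset.sum_eq_zero fun t _ => ?_
  by_cases ht : r t ≤ w
  · simp [hv t j fun hc => hj (hc.trans ht)]
  · simp [toPi_apply_eq_zero x ht]

/-- Sends the generator of grade `r t` to the vector `v t`. -/
noncomputable def ofVectors (hv : ∀ t j, ¬ c j ≤ r t → v t j = 0) :
    FreeMod k r ⟶ FreeMod k c where
  app w := ModuleCat.ofHom <| LinearMap.pi fun j => LinearMap.codRestrict _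
      ((LinearMap.proj j).comp ((Fintype.linearCombination k v).comp (toPi r w))) fun x => by
        split_ifs with h
        exacts [mem_top, (mem_bot k).2 (linearCombination_toPi_apply_eq_zero r c v hv x h)]
  naturality _ _ h := by
    ext x : 2
    exact toPi_injective _ rfl

variable {r c v}

theorem toPi_ofVectors_app (hv : ∀ t j, ¬ c j ≤ r t → v t j = 0) (w : Zn n)
    (x : (FreeMod k r).obj w) :
    toPi c w ((ofVectors r c v hv).app w x) = Fintype.linearCombination k v (toPi r w x) :=
  rfl

theorem ofVectors_app_injective (hv : ∀ t j, ¬ c j ≤ r t → v t j = 0)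
    (hli : LinearIndependent k v) (w : Zn n) : Function.Injective ((ofVectors r c v hv).app w) :=
  fun x y hxy => toPi_injective w <| hli.fintypeLinearCombination_injective <| by
    rw [← toPi_ofVectors_app hv, ← toPi_ofVectors_app hv, hxy]

theorem map_toPi_range_ofVectors_app (hv : ∀ t j, ¬ c j ≤ r t → v t j = 0) (w : Zn n) :
    map (toPi c w) (LinearMap.range ((ofVectors r c v hv).app w).hom) =
      span k (v '' {t | r t ≤ w}) := by
  refine le_antisymm ?_ (span_le.2 ?_)
  · rintro _ ⟨_, ⟨x, rfl⟩, rfl⟩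
    rw [toPi_ofVectors_app, Fintype.linearCombination_apply]
    refine sum_mem fun t _ => ?_
    by_cases ht : r t ≤ w
    · exact smul_mem _ _ (subset_span ⟨t, ht, rfl⟩)
    · simp [toPi_apply_eq_zero x ht]
  · rintro _ ⟨t, ht, rfl⟩
    obtain ⟨x, hx⟩ := exists_toPi_eq (r := r) (w := w) (u := Pi.single t (1 : k))
      fun t' ht' => Pi.single_eq_of_ne (fun h : t' = t => ht' (h ▸ ht)) _
    refine ⟨_, ⟨x, rfl⟩, ?_⟩
    rw [toPi_ofVectors_app, hx, Fintype.linearCombination_apply_single, one_smul]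

end OfVectors

end FreeMod

open FreeMod

/-- The kernel of any morphism between finitely generated free `ℤ²`-persistence modules is
itself a (finitely generated) free `ℤ²`-persistence module. -/
theorem stmt_9 {m' n' : ℕ} (rg : Fin m' → Zn 2) (cg : Fin n' → Zn 2)
    (f : FreeMod k cg ⟶ FreeMod k rg) :
    ∃ (s : ℕ) (r : Fin s → Zn 2), Nonempty (Limits.kernel f ≅ FreeMod k r) := by
  obtain ⟨lo, hlo⟩ := (Set.finite_range cg).bddBelow
  obtain ⟨hi, hhi⟩ := (Set.finite_range cg).bddAbove
  obtain ⟨s, v, r, hli, hspan⟩ := exists_linearIndependent_span_eq (kerFiltration f)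
    kerFiltration_mono kerFiltration_inf_le lo hi
    (fun w hw => kerFiltration_eq_bot fun j hj => hw ((hlo ⟨j, rfl⟩).trans hj))
    (fun w => kerFiltration_le fun j hj => le_inf hj (hhi ⟨j, rfl⟩))
  have hv : ∀ t j, ¬ cg j ≤ r t → v t j = 0 := fun t j => apply_eq_zero_of_mem_kerFiltration
    (by rw [hspan]; exact subset_span ⟨t, le_refl (r t), rfl⟩)
  refine ⟨s, r, nonempty_kernel_iso_of_range_eq_ker (ofVectors r cg v hv) f
    (ofVectors_app_injective hv hli) fun w => ?_⟩
  apply map_injective_of_injective (toPi_injective w)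
  rw [map_toPi_range_ofVectors_app, ← hspan]
  rfl
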